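/- Refined elasticity bound: Let G = (V,E,r) be a graph and let k ≥ 2. If an element a ∈ A(G) can be written both as a sum of k atoms and as a sum of l atoms, then l ≤ (k − 1)·|V| + 1. -/

import Mathlib

/-- An agglomeration on the graph given by `r : E → Sym2 V`. -/
def IsAgg {V E : Type*} (r : E → Sym2 V) (a : (V → ℕ) × (E → ℕ)) : Prop :=
  ∀ (e : E) (v : V), v ∈ r e → a.2 e ≤ a.1 v

/-- An atom of the monoid of agglomerations. -/
def IsAtomAgg {V E : Type*} (r : E → Sym2 V) (a : (V → ℕ) × (E → ℕ)) : Prop :=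
  IsAgg r a ∧ a ≠ 0 ∧
    ∀ b c : (V → ℕ) × (E → ℕ), IsAgg r b → IsAgg r c → a = b + c → b = 0 ∨ c = 0

/-!
Atoms are `0/1`-valued on vertices, so the vertex mass `∑ v, a.1 v` is the total size of the
vertex supports of the atoms in any factorisation of `a`. Fix an atom `b₀` of the factorisation
of length `k`, with vertex support `S`, and let `Tᵢ ⊆ S` be the part of `S` in the support of
the `i`-th atom `cᵢ` of the factorisation of length `l`. An edge carried by `b₀` is carried by
some `cᵢ`, so both its endpoints lie in `Tᵢ`; hence if `S` split into two nonempty parts, each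
a union of pieces `Tᵢ`, restricting `b₀` to the parts would split the atom `b₀`. A set connected
by pieces in this sense has `|S| ≤ 1 + ∑ᵢ (|Tᵢ| - 1)`, while the two expressions for the vertex
mass give `l + ∑ᵢ (|Tᵢ| - 1) ≤ |S| + (k - 1)|V|`.
-/

open Finset

section Connectivity

variable {ι α : Type*}

def IsConnectedBy (s : Finset ι) (T : ι → Finset α) (S : Finset α) : Prop :=
  ∀ A ⊆ S, (∀ i ∈ s, T i ⊆ A ∨ Disjoint (T i) A) → A = ∅ ∨ A = S

variable {s : Finset ι} {T : ι → Finset α} {S : Finset α}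

lemma IsConnectedBy.card_le_one_add_sum_card_sub_one_of_grow [DecidableEq α]
    (hS : IsConnectedBy s T S) (hTS : ∀ i ∈ s, T i ⊆ S) (A : Finset α) (J : Finset ι)
    (hJs : J ⊆ s) (hAS : A ⊆ S) (hA : A.Nonempty) (hJA : ∀ j ∈ J, T j ⊆ A)
    (hAJ : #A ≤ 1 + ∑ j ∈ J, (#(T j) - 1)) :
    #S ≤ 1 + ∑ i ∈ s, (#(T i) - 1) := by
  classical
  by_cases hAeq : A = S
  · subst hAeq
    have := sum_le_sum_of_subset (f := fun i => #(T i) - 1) hJs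
    omega
  -- Absorb a piece meeting `A` but not inside it: this adds at most `#(T i) - 1` points.
  obtain ⟨i, hi, hiA, hmeet⟩ : ∃ i ∈ s, ¬ T i ⊆ A ∧ ¬ Disjoint (T i) A := by
    by_contra! h
    rcases hS A hAS fun i hi => (em (T i ⊆ A)).imp_right (h i hi) with h | h
    · exact hA.ne_empty h
    · exact hAeq h
  have hiJ : i ∉ J := fun hiJ => hiA (hJA i hiJ)
  refine hS.card_le_one_add_sum_card_sub_one_of_grow hTS (A ∪ T i) (insert i J)
    (insert_subset hi hJs) (union_subset hAS (hTS i hi)) (hA.mono subset_union_left) ?_ ?_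
  · intro j hj
    rcases mem_insert.mp hj with rfl | hj
    · exact subset_union_right
    · exact (hJA j hj).trans subset_union_left
  · have hunion := card_union_add_card_inter A (T i)
    have hinter : 0 < #(A ∩ T i) :=
      card_pos.mpr (not_disjoint_iff_nonempty_inter.mp fun h => hmeet h.symm)
    rw [sum_insert hiJ]
    omega
termination_by #(S \ A)
decreasing_by
  obtain ⟨x, hxT, hxA⟩ := not_subset.mp hiA
  refine card_lt_card ⟨sdiff_subset_sdiff subset_rfl subset_union_left, fun h => ?_⟩
  have hx : x ∈ S \ A := mem_sdiff.mpr ⟨hTS i hi hxT, hxA⟩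
  exact (mem_sdiff.mp (h hx)).2 (mem_union_right A hxT)

lemma IsConnectedBy.card_le_one_add_sum_card_sub_one (hS : IsConnectedBy s T S)
    (hTS : ∀ i ∈ s, T i ⊆ S) : #S ≤ 1 + ∑ i ∈ s, (#(T i) - 1) := by
  classical
  obtain rfl | ⟨v, hv⟩ := S.eq_empty_or_nonempty
  · simp
  · exact hS.card_le_one_add_sum_card_sub_one_of_grow hTS {v} ∅ (empty_subset s)
      (singleton_subset_iff.mpr hv) (singleton_nonempty v) (by simp) (by simp)

end Connectivity

section Agglomeration

variable {V E : Type*} {r : E → Sym2 V}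

lemma IsAgg.eq_zero_of_fst_eq_zero {a : (V → ℕ) × (E → ℕ)} (ha : IsAgg r a) (h : a.1 = 0) :
    a = 0 := by
  refine Prod.ext h (funext fun e => ?_)
  obtain ⟨v, hv⟩ : ∃ v, v ∈ r e := (r e).inductionOn fun x y => ⟨x, Sym2.mem_mk_left x y⟩
  simpa [h] using ha e v hv

lemma IsAtomAgg.fst_le_one {a : (V → ℕ) × (E → ℕ)} (ha : IsAtomAgg r a) (v : V) : a.1 v ≤ 1 := by
  obtain ⟨hagg, hne, hsplit⟩ := ha
  let x : (V → ℕ) × (E → ℕ) := (fun v => min (a.1 v) 1, fun e => min (a.2 e) 1)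
  let y : (V → ℕ) × (E → ℕ) := (fun v => a.1 v - min (a.1 v) 1, fun e => a.2 e - min (a.2 e) 1)
  have hx : IsAgg r x := fun e v hv => by have := hagg e v hv; simp only [x]; omega
  have hy : IsAgg r y := fun e v hv => by have := hagg e v hv; simp only [y]; omega
  have hxy : a = x + y := by
    ext <;> simp only [x, y, Prod.fst_add, Prod.snd_add, Pi.add_apply] <;> omega
  rcases hsplit x y hx hy hxy with h0 | h0
  · refine absurd (hagg.eq_zero_of_fst_eq_zero (funext fun w => ?_)) hne
    have := congrFun (congrArg Prod.fst h0) w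
    simp only [x, Prod.fst_zero, Pi.zero_apply] at this
    simp only [Pi.zero_apply]
    omega
  · have := congrFun (congrArg Prod.fst h0) v
    simp only [y, Prod.fst_zero, Pi.zero_apply] at this
    omega

lemma IsAtomAgg.support_subset_or_disjoint {b : (V → ℕ) × (E → ℕ)} (hb : IsAtomAgg r b)
    (A : Set V) (hA : ∀ e, b.2 e ≠ 0 → ∀ v ∈ r e, ∀ w ∈ r e, v ∈ A → w ∈ A) :
    Function.support b.1 ⊆ A ∨ Disjoint (Function.support b.1) A := by
  obtain ⟨hagg, -, hsplit⟩ := hb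
  let EA : Set E := {e | ∃ v ∈ r e, v ∈ A}
  let x : (V → ℕ) × (E → ℕ) := (A.indicator b.1, EA.indicator b.2)
  let y : (V → ℕ) × (E → ℕ) := (Aᶜ.indicator b.1, EAᶜ.indicator b.2)
  have hx : IsAgg r x := by
    intro e v hv
    show EA.indicator b.2 e ≤ A.indicator b.1 v
    by_cases he : e ∈ EA
    · rw [Set.indicator_of_mem he]
      obtain hbe | hbe := eq_or_ne (b.2 e) 0
      · simp [hbe]
      · obtain ⟨w, hw, hwA⟩ := he
        rw [Set.indicator_of_mem (hA e hbe w hw v hv hwA)]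
        exact hagg e v hv
    · simp [Set.indicator_of_notMem he]
  have hy : IsAgg r y := by
    intro e v hv
    show EAᶜ.indicator b.2 e ≤ Aᶜ.indicator b.1 v
    by_cases he : e ∈ EA
    · simp [Set.indicator_of_notMem (Set.notMem_compl_iff.mpr he)]
    · have hvA : v ∉ A := fun hvA => he ⟨v, hv, hvA⟩
      rw [Set.indicator_of_mem (Set.mem_compl he), Set.indicator_of_mem (Set.mem_compl hvA)]
      exact hagg e v hv
  have hxy : b = x + y := by
    simp only [x, y, Prod.mk_add_mk, Set.indicator_self_add_compl]
  rcases hsplit x y hx hy hxy with h0 | h0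
  · refine Or.inr (Set.disjoint_left.mpr fun v hv hvA => hv ?_)
    simpa [x, hvA] using congrFun (congrArg Prod.fst h0) v
  · refine Or.inl fun v hv => by_contra fun hvA => hv ?_
    simpa [y, hvA] using congrFun (congrArg Prod.fst h0) v

variable [Fintype V]

def vertexSupport (x : (V → ℕ) × (E → ℕ)) : Finset V := {v | x.1 v ≠ 0}

@[simp]
lemma mem_vertexSupport {x : (V → ℕ) × (E → ℕ)} {v : V} : v ∈ vertexSupport x ↔ x.1 v ≠ 0 := by
  simp [vertexSupport]

lemma IsAgg.mem_vertexSupport {x : (V → ℕ) × (E → ℕ)} (hx : IsAgg r x) {e : E} (he : x.2 e ≠ 0)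
    {v : V} (hv : v ∈ r e) : v ∈ vertexSupport x :=
  _root_.mem_vertexSupport.mpr (by have := hx e v hv; omega)

lemma IsAtomAgg.vertexSupport_nonempty {x : (V → ℕ) × (E → ℕ)} (hx : IsAtomAgg r x) :
    (vertexSupport x).Nonempty := by
  by_contra! h
  refine hx.2.1 (hx.1.eq_zero_of_fst_eq_zero (funext fun v => ?_))
  simpa using (eq_empty_iff_forall_notMem.mp h) v

lemma IsAtomAgg.card_vertexSupport {x : (V → ℕ) × (E → ℕ)} (hx : IsAtomAgg r x) :
    #(vertexSupport x) = ∑ v, x.1 v := by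
  rw [vertexSupport, card_filter]
  refine sum_congr rfl fun v _ => ?_
  have := hx.fst_le_one v
  split <;> omega

lemma sum_card_vertexSupport {ι : Type*} {s : Finset ι} {c : ι → (V → ℕ) × (E → ℕ)}
    (hc : ∀ i ∈ s, IsAtomAgg r (c i)) :
    ∑ i ∈ s, #(vertexSupport (c i)) = ∑ v, (∑ i ∈ s, c i).1 v := by
  rw [sum_congr rfl fun i hi => (hc i hi).card_vertexSupport, sum_comm]
  simp [Prod.fst_sum]

lemma IsAtomAgg.isConnectedBy [DecidableEq V] {ι : Type*} {s : Finset ι}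
    {b : (V → ℕ) × (E → ℕ)} {c : ι → (V → ℕ) × (E → ℕ)} (hb : IsAtomAgg r b)
    (hc : ∀ i ∈ s, IsAgg r (c i)) (hbc : b ≤ ∑ i ∈ s, c i) :
    IsConnectedBy s (fun i => vertexSupport (c i) ∩ vertexSupport b) (vertexSupport b) := by
  intro A hAS hA
  have hclosed : ∀ e, b.2 e ≠ 0 → ∀ v ∈ r e, ∀ w ∈ r e, v ∈ (A : Set V) → w ∈ (A : Set V) := by
    intro e hbe v hv w hw hvA
    obtain ⟨i, hi, hie⟩ : ∃ i ∈ s, (c i).2 e ≠ 0 := by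
      refine exists_ne_zero_of_sum_ne_zero ?_
      have := hbc.2 e
      simp only [Prod.snd_sum, Finset.sum_apply] at this
      omega
    have hT : ∀ u ∈ r e, u ∈ vertexSupport (c i) ∩ vertexSupport b := fun u hu =>
      mem_inter.mpr ⟨(hc i hi).mem_vertexSupport hie hu, hb.1.mem_vertexSupport hbe hu⟩
    rcases hA i hi with hsub | hdisj
    · exact hsub (hT w hw)
    · exact absurd hvA (disjoint_left.mp hdisj (hT v hv))
  rcases hb.support_subset_or_disjoint A hclosed with hsub | hdisj
  · exact Or.inr (Subset.antisymm hAS fun v hv => hsub (mem_vertexSupport.mp hv))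
  · exact Or.inl (eq_empty_of_forall_notMem fun v hv =>
      Set.disjoint_left.mp hdisj (mem_vertexSupport.mp (hAS hv)) hv)

lemma card_le_one_add_sum_card_vertexSupport_erase {ι κ : Type*} [Fintype ι] [Fintype κ]
    [DecidableEq κ] {b : κ → (V → ℕ) × (E → ℕ)} {c : ι → (V → ℕ) × (E → ℕ)}
    (hb : ∀ j, IsAtomAgg r (b j)) (hc : ∀ i, IsAtomAgg r (c i)) (h : ∑ j, b j = ∑ i, c i)
    (j₀ : κ) : Fintype.card ι ≤ 1 + ∑ j ∈ univ.erase j₀, #(vertexSupport (b j)) := by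
  classical
  set S := vertexSupport (b j₀)
  set T := fun i => vertexSupport (c i) ∩ S
  have hS : #S ≤ 1 + ∑ i, (#(T i) - 1) :=
    ((hb j₀).isConnectedBy (fun i _ => (hc i).1)
      (h ▸ single_le_sum (fun _ _ => zero_le) (mem_univ j₀))).card_le_one_add_sum_card_sub_one
      fun i _ => inter_subset_right
  have hT : ∀ i, 1 + (#(T i) - 1) ≤ #(vertexSupport (c i)) := fun i => by
    have := (hc i).vertexSupport_nonempty.card_pos
    have : #(T i) ≤ #(vertexSupport (c i)) := card_le_card inter_subset_left
    omega
  have hcount : Fintype.card ι + ∑ i, (#(T i) - 1) ≤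
      #S + ∑ j ∈ univ.erase j₀, #(vertexSupport (b j)) :=
    calc Fintype.card ι + ∑ i, (#(T i) - 1) = ∑ i, (1 + (#(T i) - 1)) := by
          simp [sum_add_distrib]
      _ ≤ ∑ i, #(vertexSupport (c i)) := sum_le_sum fun i _ => hT i
      _ = ∑ j, #(vertexSupport (b j)) := by
          rw [sum_card_vertexSupport fun i _ => hc i, sum_card_vertexSupport fun j _ => hb j, h]
      _ = #S + ∑ j ∈ univ.erase j₀, #(vertexSupport (b j)) := (add_sum_erase _ _ (mem_univ j₀)).symm
  omega

end Agglomeration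

theorem refined_elasticity_bound_general {V E : Type*} [Fintype V]
    (r : E → Sym2 V)
    (a : (V → ℕ) × (E → ℕ))
    (k l : ℕ) (hk : 2 ≤ k)
    (hka : ∃ b : Fin k → (V → ℕ) × (E → ℕ), (∀ i, IsAtomAgg r (b i)) ∧ a = ∑ i, b i)
    (hla : ∃ c : Fin l → (V → ℕ) × (E → ℕ), (∀ i, IsAtomAgg r (c i)) ∧ a = ∑ i, c i) :
    l ≤ (k - 1) * Fintype.card V + 1 := by
  obtain ⟨b, hb, rfl⟩ := hka
  obtain ⟨c, hc, hbc⟩ := hla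
  let j₀ : Fin k := ⟨0, by omega⟩
  have hl := card_le_one_add_sum_card_vertexSupport_erase hb hc hbc j₀
  have hrest : ∑ j ∈ univ.erase j₀, #(vertexSupport (b j)) ≤ (k - 1) * Fintype.card V :=
    calc ∑ j ∈ univ.erase j₀, #(vertexSupport (b j)) ≤ ∑ j ∈ univ.erase j₀, Fintype.card V :=
          sum_le_sum fun j _ => card_le_univ _
      _ = (k - 1) * Fintype.card V := by simp [card_erase_of_mem]
  rw [Fintype.card_fin] at hl
  omega

/-- **Refined elasticity bound**: if `a ∈ A(G)` is both a sum of `k ≥ 2` atoms and a sum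
of `l` atoms, then `l ≤ (k − 1)·|V| + 1`. -/
theorem refined_elasticity_bound {V E : Type*} [Fintype V] [Fintype E]
    (r : E → Sym2 V) (hr : ∀ e : E, ¬ (r e).IsDiag)
    (a : (V → ℕ) × (E → ℕ)) (ha : IsAgg r a)
    (k l : ℕ) (hk : 2 ≤ k)
    (hka : ∃ b : Fin k → (V → ℕ) × (E → ℕ), (∀ i, IsAtomAgg r (b i)) ∧ a = ∑ i, b i)
    (hla : ∃ c : Fin l → (V → ℕ) × (E → ℕ), (∀ i, IsAtomAgg r (c i)) ∧ a = ∑ i, c i) :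
    l ≤ (k - 1) * Fintype.card V + 1 :=
  refined_elasticity_bound_general r a k l hk hka hla
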